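/- arXiv:1512.02691 — 3 statements merged into one kernel-verified Lean document; each statement's English description precedes it below -/
import Mathlib

section
/- If A is an exact category and I is a small category, then the functor category Hom(Iᵒᵖ, A) of contravariant functors from I to A is an exact category when endowed with the componentwise conflations, i.e. sequences F ⟶ G ⟶ H such that for each object i of I the sequence F(i) ⟶ G(i) ⟶ H(i) is a conflation of A. -/
open CategoryTheory CategoryTheory.Limits

universe v u
/-- A Quillen exact structure on an additive category: a class of kernel–cokernel
pairs (conflations), closed under isomorphism, such that the identity of a zero
object is a deflation, deflations are closed under composition, pullbacks of
deflations exist and are deflations, and pushouts of inflations exist and are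
inflations. -/
structure ExactStructure (A : Type u) [Category.{v} A] [Preadditive A] where
  conflation : ∀ {X Y Z : A}, (X ⟶ Y) → (Y ⟶ Z) → Prop
  comp_zero : ∀ {X Y Z : A} (i : X ⟶ Y) (p : Y ⟶ Z), conflation i p → i ≫ p = 0
  isKernel : ∀ {X Y Z : A} (i : X ⟶ Y) (p : Y ⟶ Z), conflation i p →
    ∀ {W : A} (g : W ⟶ Y), g ≫ p = 0 → ∃! g' : W ⟶ X, g' ≫ i = g
  isCokernel : ∀ {X Y Z : A} (i : X ⟶ Y) (p : Y ⟶ Z), conflation i p →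
    ∀ {W : A} (g : Y ⟶ W), i ≫ g = 0 → ∃! g' : Z ⟶ W, p ≫ g' = g
  iso_closed : ∀ {X Y Z X' Y' Z' : A} (i : X ⟶ Y) (p : Y ⟶ Z)
    (i' : X' ⟶ Y') (p' : Y' ⟶ Z') (eX : X ≅ X') (eY : Y ≅ Y') (eZ : Z ≅ Z'),
    i ≫ eY.hom = eX.hom ≫ i' → p ≫ eZ.hom = eY.hom ≫ p' →
    conflation i p → conflation i' p'
  zero_deflation : ∀ Z : A, IsZero Z → ∃ (X : A) (i : X ⟶ Z), conflation i (𝟙 Z)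
  deflation_comp : ∀ {Y Z W : A} (p : Y ⟶ Z) (q : Z ⟶ W),
    (∃ (X : A) (i : X ⟶ Y), conflation i p) →
    (∃ (X : A) (i : X ⟶ Z), conflation i q) →
    ∃ (X : A) (i : X ⟶ Y), conflation i (p ≫ q)
  pullback_deflation : ∀ {Y Z Z' : A} (p : Y ⟶ Z) (f : Z' ⟶ Z),
    (∃ (X : A) (i : X ⟶ Y), conflation i p) →
    ∃ (Y' : A) (f' : Y' ⟶ Y) (p' : Y' ⟶ Z'), IsPullback f' p' p f ∧
      ∃ (X : A) (i : X ⟶ Y'), conflation i p'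
  pushout_inflation : ∀ {X Y X' : A} (i : X ⟶ Y) (f : X ⟶ X'),
    (∃ (Z : A) (p : Y ⟶ Z), conflation i p) →
    ∃ (Y' : A) (f' : Y ⟶ Y') (i' : X' ⟶ Y'), IsPushout i f f' i' ∧
      ∃ (Z : A) (p : Y' ⟶ Z), conflation i' p


namespace StmtAux

variable {A : Type u} [Category.{v} A] [Preadditive A] (E : ExactStructure A)

lemma mono_cancel {X Y Z : A} {i : X ⟶ Y} {p : Y ⟶ Z} (h : E.conflation i p)
    {W : A} {a b : W ⟶ X} (hab : a ≫ i = b ≫ i) : a = b := by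
  obtain ⟨c, _, hu⟩ := E.isKernel i p h (a ≫ i)
    (by rw [Category.assoc, E.comp_zero i p h, comp_zero])
  rw [hu a rfl, hu b hab.symm]

lemma epi_cancel {X Y Z : A} {i : X ⟶ Y} {p : Y ⟶ Z} (h : E.conflation i p)
    {W : A} {a b : Z ⟶ W} (hab : p ≫ a = p ≫ b) : a = b := by
  obtain ⟨c, _, hu⟩ := E.isCokernel i p h (p ≫ a)
    (by rw [← Category.assoc, E.comp_zero i p h, zero_comp])
  rw [hu a rfl, hu b hab.symm]

lemma conflation_zero_id {Z : A} (hZ : IsZero Z) : E.conflation (0 : Z ⟶ Z) (𝟙 Z) := by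
  obtain ⟨X, i, h⟩ := E.zero_deflation Z hZ
  have hi0 : i = 0 := by simpa using E.comp_zero i (𝟙 Z) h
  have hX : IsZero X := by
    rw [IsZero.iff_id_eq_zero]
    obtain ⟨c, _, hu⟩ := E.isKernel i (𝟙 Z) h (0 : X ⟶ Z) (by simp)
    exact (hu (𝟙 X) (by simp [hi0])).trans (hu 0 (by simp)).symm
  exact E.iso_closed i (𝟙 Z) 0 (𝟙 Z) (hX.iso hZ) (Iso.refl Z) (Iso.refl Z)
    (by simp [hi0]) (by simp) h

lemma kernelAssembly {J : Type*} [Category J] {Y Z : J ⥤ A} (p : Y ⟶ Z)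
    (h : ∀ j, ∃ (X : A) (i : X ⟶ Y.obj j), E.conflation i (p.app j)) :
    ∃ (X : J ⥤ A) (i : X ⟶ Y), ∀ j, E.conflation (i.app j) (p.app j) := by
  choose K k hk using h
  have key : ∀ (j j' : J) (f : j ⟶ j'), ∃! m : K j ⟶ K j', m ≫ k j' = k j ≫ Y.map f := by
    intro j j' f
    exact E.isKernel _ _ (hk j') (k j ≫ Y.map f)
      (by rw [Category.assoc, p.naturality, ← Category.assoc, E.comp_zero _ _ (hk j), zero_comp])
  choose m hm hu using key
  refine ⟨{ obj := K
            map := fun f => m _ _ f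
            map_id := fun j => (hu j j (𝟙 j) (𝟙 (K j)) (by simp)).symm
            map_comp := fun {a b c} f g => (hu a c (f ≫ g) (m a b f ≫ m b c g)
              (by dsimp only; rw [Category.assoc, hm b c g, ← Category.assoc, hm a b f, Category.assoc,
                ← Y.map_comp])).symm },
    { app := k
      naturality := fun j j' f => hm j j' f }, hk⟩

lemma cokernelAssembly {J : Type*} [Category J] {X Y : J ⥤ A} (i : X ⟶ Y)
    (h : ∀ j, ∃ (Z : A) (p : Y.obj j ⟶ Z), E.conflation (i.app j) p) :
    ∃ (Z : J ⥤ A) (p : Y ⟶ Z), ∀ j, E.conflation (i.app j) (p.app j) := by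
  choose C c hc using h
  have key : ∀ (j j' : J) (f : j ⟶ j'), ∃! m : C j ⟶ C j', c j ≫ m = Y.map f ≫ c j' := by
    intro j j' f
    exact E.isCokernel _ _ (hc j) (Y.map f ≫ c j')
      (by rw [← Category.assoc, ← i.naturality, Category.assoc, E.comp_zero _ _ (hc j'),
        comp_zero])
  choose m hm hu using key
  refine ⟨{ obj := C
            map := fun f => m _ _ f
            map_id := fun j => (hu j j (𝟙 j) (𝟙 (C j)) (by simp)).symm
            map_comp := fun {a b c'} f g => (hu a c' (f ≫ g) (m a b f ≫ m b c' g)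
              (by dsimp only; rw [← Category.assoc, hm a b f, Category.assoc, hm b c' g, ← Category.assoc,
                ← Y.map_comp])).symm },
    { app := c
      naturality := fun j j' f => (hm j j' f).symm }, hc⟩

lemma pullbackAssembly {J : Type*} [Category J] {Y Z Z' : J ⥤ A} (p : Y ⟶ Z) (f : Z' ⟶ Z)
    (h : ∀ j, ∃ (X : A) (i : X ⟶ Y.obj j), E.conflation i (p.app j)) :
    ∃ (Y' : J ⥤ A) (f' : Y' ⟶ Y) (p' : Y' ⟶ Z'), IsPullback f' p' p f ∧
      ∀ j, ∃ (X : A) (i : X ⟶ Y'.obj j), E.conflation i (p'.app j) := by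
  choose P a b hpb hd using fun j => E.pullback_deflation (p.app j) (f.app j) (h j)
  have w : ∀ {j j' : J} (g : j ⟶ j'),
      (a j ≫ Y.map g) ≫ p.app j' = (b j ≫ Z'.map g) ≫ f.app j' := fun {j j'} g => by
    rw [Category.assoc, p.naturality, ← Category.assoc, (hpb j).w, Category.assoc,
      ← f.naturality, ← Category.assoc]
  let PF : J ⥤ A :=
    { obj := P
      map := fun {j j'} g => (hpb j').lift (a j ≫ Y.map g) (b j ≫ Z'.map g) (w g)
      map_id := fun j => (hpb j).hom_ext (by simp) (by simp)
      map_comp := fun {j j' j''} g g' => (hpb j'').hom_ext (by simp) (by simp) }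
  let aN : PF ⟶ Y := { app := a, naturality := fun j j' g => by simp [PF] }
  let bN : PF ⟶ Z' := { app := b, naturality := fun j j' g => by simp [PF] }
  have sq : aN ≫ p = bN ≫ f := by ext j; exact (hpb j).w
  have hcomp : ∀ (s : PullbackCone p f) (j : J),
      s.fst.app j ≫ p.app j = s.snd.app j ≫ f.app j := fun s j => by
    simpa using NatTrans.congr_app s.condition j
  let L : ∀ s : PullbackCone p f, s.pt ⟶ PF := fun s =>
    { app := fun j => (hpb j).lift (s.fst.app j) (s.snd.app j) (hcomp s j)
      naturality := fun j j' g => (hpb j').hom_ext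
        (by simp [PF, s.fst.naturality]) (by simp [PF, s.snd.naturality]) }
  have hlim : IsLimit (PullbackCone.mk aN bN sq) :=
    PullbackCone.IsLimit.mk sq L
      (fun s => by ext j; exact (hpb j).lift_fst _ _ _)
      (fun s => by ext j; exact (hpb j).lift_snd _ _ _)
      (fun s mm h1 h2 => by
        ext j
        refine (hpb j).hom_ext ?_ ?_
        · exact ((by simpa using NatTrans.congr_app h1 j :
            mm.app j ≫ a j = s.fst.app j)).trans ((hpb j).lift_fst _ _ _).symm
        · exact ((by simpa using NatTrans.congr_app h2 j :
            mm.app j ≫ b j = s.snd.app j)).trans ((hpb j).lift_snd _ _ _).symm)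
  exact ⟨PF, aN, bN, IsPullback.of_isLimit hlim, hd⟩

lemma pushoutAssembly {J : Type*} [Category J] {X Y X' : J ⥤ A} (i : X ⟶ Y) (f : X ⟶ X')
    (h : ∀ j, ∃ (Z : A) (p : Y.obj j ⟶ Z), E.conflation (i.app j) p) :
    ∃ (Y' : J ⥤ A) (f' : Y ⟶ Y') (i' : X' ⟶ Y'), IsPushout i f f' i' ∧
      ∀ j, ∃ (Z : A) (p : Y'.obj j ⟶ Z), E.conflation (i'.app j) p := by
  choose Q u v hpo hd using fun j => E.pushout_inflation (i.app j) (f.app j) (h j)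
  have w : ∀ {j j' : J} (g : j ⟶ j'),
      i.app j ≫ (Y.map g ≫ u j') = f.app j ≫ (X'.map g ≫ v j') := fun {j j'} g => by
    rw [← Category.assoc, ← i.naturality, Category.assoc, (hpo j').w, ← Category.assoc,
      f.naturality, Category.assoc]
  let QF : J ⥤ A :=
    { obj := Q
      map := fun {j j'} g => (hpo j).desc (Y.map g ≫ u j') (X'.map g ≫ v j') (w g)
      map_id := fun j => (hpo j).hom_ext (by simp) (by simp)
      map_comp := fun {j j' j''} g g' => (hpo j).hom_ext (by simp) (by simp) }
  let uN : Y ⟶ QF := { app := u, naturality := fun j j' g => by simp [QF] }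
  let vN : X' ⟶ QF := { app := v, naturality := fun j j' g => by simp [QF] }
  have sq : i ≫ uN = f ≫ vN := by ext j; exact (hpo j).w
  have hcomp : ∀ (s : PushoutCocone i f) (j : J),
      i.app j ≫ s.inl.app j = f.app j ≫ s.inr.app j := fun s j => by
    simpa using NatTrans.congr_app s.condition j
  let D : ∀ s : PushoutCocone i f, QF ⟶ s.pt := fun s =>
    { app := fun j => (hpo j).desc (s.inl.app j) (s.inr.app j) (hcomp s j)
      naturality := fun j j' g => (hpo j).hom_ext
        (by simp [QF, s.inl.naturality]) (by simp [QF, s.inr.naturality]) }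
  have hcolim : IsColimit (PushoutCocone.mk uN vN sq) :=
    PushoutCocone.IsColimit.mk sq D
      (fun s => by ext j; exact (hpo j).inl_desc _ _ _)
      (fun s => by ext j; exact (hpo j).inr_desc _ _ _)
      (fun s mm h1 h2 => by
        ext j
        refine (hpo j).hom_ext ?_ ?_
        · exact ((by simpa using NatTrans.congr_app h1 j :
            u j ≫ mm.app j = s.inl.app j)).trans ((hpo j).inl_desc _ _ _).symm
        · exact ((by simpa using NatTrans.congr_app h2 j :
            v j ≫ mm.app j = s.inr.app j)).trans ((hpo j).inr_desc _ _ _).symm)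
  exact ⟨QF, uN, vN, IsPushout.of_isColimit hcolim, hd⟩

end StmtAux

/-- If `A` is an exact category and `I` is a small category, then the category of
contravariant functors `Iᵒᵖ ⥤ A` is an exact category when endowed with the
componentwise conflations. -/
theorem stmt_3 {A : Type u} [Category.{v} A] [Preadditive A] (E : ExactStructure A)
    (I : Type*) [SmallCategory I] :
    ∃ EI : ExactStructure (Iᵒᵖ ⥤ A),
      ∀ (F G H : Iᵒᵖ ⥤ A) (φ : F ⟶ G) (ψ : G ⟶ H),
        EI.conflation φ ψ ↔ ∀ i : Iᵒᵖ, E.conflation (φ.app i) (ψ.app i) := by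
  refine ⟨{
    conflation := fun {F G H} φ ψ => ∀ j, E.conflation (φ.app j) (ψ.app j)
    comp_zero := fun {F G H} φ ψ h => by
      ext j
      simp only [NatTrans.comp_app, zero_app]
      exact E.comp_zero _ _ (h j)
    isKernel := fun {F G H} φ ψ h {W} g hg => by
      have hcomp : ∀ j, g.app j ≫ ψ.app j = 0 := fun j => by
        simpa using NatTrans.congr_app hg j
      choose g' hg1 hg2 using fun j => E.isKernel _ _ (h j) (g.app j) (hcomp j)
      have nat : ∀ {j j' : Iᵒᵖ} (f : j ⟶ j'), W.map f ≫ g' j' = g' j ≫ F.map f := by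
        intro j j' f
        apply StmtAux.mono_cancel E (h j')
        rw [Category.assoc, hg1, Category.assoc, φ.naturality, ← Category.assoc, hg1,
          g.naturality]
      refine ⟨{ app := g', naturality := fun _ _ f => nat f }, ?_, ?_⟩
      · ext j; exact hg1 j
      · intro y hy; ext j
        exact hg2 j (y.app j) (by simpa using NatTrans.congr_app hy j)
    isCokernel := fun {F G H} φ ψ h {W} g hg => by
      have hcomp : ∀ j, φ.app j ≫ g.app j = 0 := fun j => by
        simpa using NatTrans.congr_app hg j
      choose g' hg1 hg2 using fun j => E.isCokernel _ _ (h j) (g.app j) (hcomp j)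
      have nat : ∀ {j j' : Iᵒᵖ} (f : j ⟶ j'), H.map f ≫ g' j' = g' j ≫ W.map f := by
        intro j j' f
        apply StmtAux.epi_cancel E (h j)
        rw [← Category.assoc, ← ψ.naturality, Category.assoc, hg1, ← Category.assoc, hg1,
          g.naturality]
      refine ⟨{ app := g', naturality := fun _ _ f => nat f }, ?_, ?_⟩
      · ext j; exact hg1 j
      · intro y hy; ext j
        exact hg2 j (y.app j) (by simpa using NatTrans.congr_app hy j)
    iso_closed := fun {F G H F' G' H'} φ ψ φ' ψ' eX eY eZ h1 h2 h j =>
      E.iso_closed _ _ _ _ (eX.app j) (eY.app j) (eZ.app j)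
        (NatTrans.congr_app h1 j) (NatTrans.congr_app h2 j) (h j)
    zero_deflation := fun Z hZ => by
      refine ⟨Z, 0, fun j => ?_⟩
      have hj : IsZero (Z.obj j) := by
        rw [IsZero.iff_id_eq_zero]
        have h0 : (𝟙 Z : Z ⟶ Z) = 0 := hZ.eq_of_src _ _
        simpa using NatTrans.congr_app h0 j
      simp only [zero_app, NatTrans.id_app]
      exact StmtAux.conflation_zero_id E hj
    deflation_comp := fun {Y Z W} p q hp hq => by
      obtain ⟨X1, i1, h1⟩ := hp
      obtain ⟨X2, i2, h2⟩ := hq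
      exact StmtAux.kernelAssembly E (p ≫ q) (fun j =>
        E.deflation_comp (p.app j) (q.app j) ⟨_, i1.app j, h1 j⟩ ⟨_, i2.app j, h2 j⟩)
    pullback_deflation := fun {Y Z Z'} p f hp => by
      obtain ⟨X0, i0, h0⟩ := hp
      obtain ⟨Y', f', p', hpb, hd⟩ := StmtAux.pullbackAssembly E p f (fun j => ⟨_, i0.app j, h0 j⟩)
      exact ⟨Y', f', p', hpb, StmtAux.kernelAssembly E p' hd⟩
    pushout_inflation := fun {X Y X'} i f hi => by
      obtain ⟨Z0, p0, h0⟩ := hi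
      obtain ⟨Y', f', i', hpo, hd⟩ := StmtAux.pushoutAssembly E i f (fun j => ⟨_, p0.app j, h0 j⟩)
      exact ⟨Y', f', i', hpo, StmtAux.cokernelAssembly E i' hd⟩ },
    fun F G H φ ψ => Iff.rfl⟩
end

section
/- Let T be a triangulated category, F, F' : A ⟶ T two ∂-functors from an exact category A, and suppose Hom(F(X)[1], F'(Z)) = 0 for all X, Z in A. Then every natural transformation α : F ⟶ F' of the underlying additive functors is automatically a morphism of ∂-functors, i.e. for every conflation ε : X ⟶ Y ⟶ Z the square with ∂ε : F(Z) ⟶ F(X)[1], ∂'ε : F'(Z) ⟶ F'(X)[1], α_Z and α_X[1] commutes. -/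
open CategoryTheory CategoryTheory.Limits CategoryTheory.Pretriangulated

universe v u v' u'

/-! The three maps `α_X, α_Y, α_Z` commute with the first two morphisms of the triangles
`F X → F Y → F Z → (F X)⟦1⟧` and `F' X → F' Y → F' Z → (F' X)⟦1⟧`, and the axiom TR3 supplies
some `γ : F Z ⟶ F' Z` making all three squares commute. Then `γ - α_Z` vanishes on `F p`, so it
factors through the connecting morphism `F Z ⟶ (F X)⟦1⟧`; the factorisation is a map
`(F X)⟦1⟧ ⟶ F' Z`, hence zero. Thus `α_Z = γ`, and the third square commutes. -/

namespace CategoryTheory.Pretriangulated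

variable {C : Type*} [Category C] [Preadditive C] [HasZeroObject C] [HasShift C ℤ]
  [∀ n : ℤ, (CategoryTheory.shiftFunctor C n).Additive] [Pretriangulated C]

lemma Triangle.eq_zero_of_mor₂_comp_eq_zero (T : Triangle C) (hT : T ∈ distTriang C) {W : C}
    (hW : ∀ g : T.obj₁⟦(1 : ℤ)⟧ ⟶ W, g = 0) (f : T.obj₃ ⟶ W) (hf : T.mor₂ ≫ f = 0) :
    f = 0 := by
  obtain ⟨g, rfl⟩ := yoneda_exact₃ T hT f hf
  rw [hW g, comp_zero]

lemma Triangle.mor₃_comm_of_shift_hom_eq_zero (T₁ T₂ : Triangle C) (hT₁ : T₁ ∈ distTriang C)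
    (hT₂ : T₂ ∈ distTriang C) (hHom : ∀ g : T₁.obj₁⟦(1 : ℤ)⟧ ⟶ T₂.obj₃, g = 0)
    (a : T₁.obj₁ ⟶ T₂.obj₁) (b : T₁.obj₂ ⟶ T₂.obj₂) (c : T₁.obj₃ ⟶ T₂.obj₃)
    (comm₁ : T₁.mor₁ ≫ b = a ≫ T₂.mor₁) (comm₂ : T₁.mor₂ ≫ c = b ≫ T₂.mor₂) :
    T₁.mor₃ ≫ a⟦(1 : ℤ)⟧' = c ≫ T₂.mor₃ := by
  obtain ⟨γ, hγ₂, hγ₃⟩ := complete_distinguished_triangle_morphism T₁ T₂ hT₁ hT₂ a b comm₁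
  have hγ : γ - c = 0 := eq_zero_of_mor₂_comp_eq_zero T₁ hT₁ hHom _ (by
    rw [Preadditive.comp_sub, hγ₂, comm₂, sub_self])
  rwa [← sub_eq_zero.mp hγ]

end CategoryTheory.Pretriangulated

/-- Let `F, F' : A ⥤ T` be two ∂-functors from an exact category `A` to a
triangulated category `T` (additive functors with functorial connecting morphisms
`del`, `del'` making the images of conflations distinguished triangles), and suppose
`Hom((F X)⟦1⟧, F' Z) = 0` for all `X, Z`. Then every natural transformation
`α : F ⟶ F'` of the underlying additive functors is automatically a morphism of
∂-functors: for every conflation the square involving `∂ε`, `del'ε`, `α_Z` and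
`α_X⟦1⟧` commutes. -/
theorem stmt_14 {A : Type u} [Category.{v} A] [Preadditive A] (E : ExactStructure A)
    {T : Type u'} [Category.{v'} T] [HasZeroObject T] [Preadditive T] [HasShift T ℤ]
    [∀ n : ℤ, (CategoryTheory.shiftFunctor T n).Additive] [Pretriangulated T]
    (F F' : A ⥤ T) [F.Additive] [F'.Additive]
    (del : ∀ {X Y Z : A} (i : X ⟶ Y) (p : Y ⟶ Z), E.conflation i p →
      (F.obj Z ⟶ (F.obj X)⟦(1 : ℤ)⟧))
    (del' : ∀ {X Y Z : A} (i : X ⟶ Y) (p : Y ⟶ Z), E.conflation i p →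
      (F'.obj Z ⟶ (F'.obj X)⟦(1 : ℤ)⟧))
    (hdel : ∀ {X Y Z : A} (i : X ⟶ Y) (p : Y ⟶ Z) (hc : E.conflation i p),
      Triangle.mk (F.map i) (F.map p) (del i p hc) ∈ distTriang T)
    (hdel' : ∀ {X Y Z : A} (i : X ⟶ Y) (p : Y ⟶ Z) (hc : E.conflation i p),
      Triangle.mk (F'.map i) (F'.map p) (del' i p hc) ∈ distTriang T)
    (hdelnat : ∀ {X Y Z X' Y' Z' : A} (i : X ⟶ Y) (p : Y ⟶ Z) (hc : E.conflation i p)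
      (i' : X' ⟶ Y') (p' : Y' ⟶ Z') (hc' : E.conflation i' p')
      (a : X ⟶ X') (b : Y ⟶ Y') (c : Z ⟶ Z'),
      i ≫ b = a ≫ i' → p ≫ c = b ≫ p' →
      del i p hc ≫ (CategoryTheory.shiftFunctor T (1 : ℤ)).map (F.map a) =
        F.map c ≫ del i' p' hc')
    (hdel'nat : ∀ {X Y Z X' Y' Z' : A} (i : X ⟶ Y) (p : Y ⟶ Z) (hc : E.conflation i p)
      (i' : X' ⟶ Y') (p' : Y' ⟶ Z') (hc' : E.conflation i' p')
      (a : X ⟶ X') (b : Y ⟶ Y') (c : Z ⟶ Z'),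
      i ≫ b = a ≫ i' → p ≫ c = b ≫ p' →
      del' i p hc ≫ (CategoryTheory.shiftFunctor T (1 : ℤ)).map (F'.map a) =
        F'.map c ≫ del' i' p' hc')
    (toda : ∀ (X Z : A) (f : (F.obj X)⟦(1 : ℤ)⟧ ⟶ F'.obj Z), f = 0)
    (α : F ⟶ F') :
    ∀ {X Y Z : A} (i : X ⟶ Y) (p : Y ⟶ Z) (hc : E.conflation i p),
      α.app Z ≫ del' i p hc =
        del i p hc ≫ (CategoryTheory.shiftFunctor T (1 : ℤ)).map (α.app X) := by
  intro X Y Z i p hc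
  exact (Triangle.mor₃_comm_of_shift_hom_eq_zero _ _ (hdel i p hc) (hdel' i p hc) (toda X Z)
    (α.app X) (α.app Y) (α.app Z) (α.naturality i) (α.naturality p)).symm
end

section
/- Let A be an exact category and D^b(A) = H^b(A)/N its bounded derived category, with canonical embedding can : A ⟶ D^b(A) sending X to the complex concentrated in degree 0. Then for every conflation ε : X ⟶ Y ⟶ Z of A there is a canonical distinguished triangle can(X) ⟶ can(Y) ⟶ can(Z) ⟶ can(X)[1] in D^b(A), where the connecting morphism ∂ε is the image in D^b(A) of the roof built from the mapping-cone quasi-isomorphism Cone(X ⟶ Y) ⟶ Z. -/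
open CategoryTheory CategoryTheory.Limits CategoryTheory.Pretriangulated

universe v u v' u'

variable {A : Type u} [Category.{v} A] [Preadditive A]

/-- A complex is bounded if its components vanish outside a finite range. -/
def IsBoundedComplex (N : CochainComplex A ℤ) : Prop :=
  ∃ a b : ℤ, ∀ p : ℤ, (p < a ∨ b < p) → IsZero (N.X p)

/-- A complex `N` is strictly acyclic if there are conflations
`Z^p ⟶ N^p ⟶ Z^{p+1}` such that each differential `d^p` factors as the deflation
`N^p ⟶ Z^{p+1}` followed by the inflation `Z^{p+1} ⟶ N^{p+1}`. -/
def StrictlyAcyclic (E : ExactStructure A) (N : CochainComplex A ℤ) : Prop :=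
  ∃ (Z : ℤ → A) (i : ∀ p : ℤ, Z p ⟶ N.X p) (q : ∀ p : ℤ, N.X p ⟶ Z (p + 1)),
    (∀ p : ℤ, E.conflation (i p) (q p)) ∧
    (∀ p : ℤ, N.d p (p + 1) = q p ≫ i (p + 1))

/-!
The conflation `X ⟶ Y ⟶ Z`, viewed as a complex in degrees `-2, -1, 0`, is strictly acyclic
and bounded, so `L` kills it. Up to isomorphism that complex is the mapping cone of the map
`φ : Cone(i) ⟶ Z` induced by `p` (where `i` and `p` are seen as maps of complexes concentrated
in degree `0`), hence `L φ` is an isomorphism. Transporting the standard triangle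
`X ⟶ Y ⟶ Cone(i) ⟶ X⟦1⟧` along `L φ` gives the triangle `X ⟶ Y ⟶ Z ⟶ X⟦1⟧`.
-/

namespace ExactStructure

variable (E : ExactStructure A)

lemma isZero_of_conflation_of_mono {X Y Z : A} {i : X ⟶ Y} {p : Y ⟶ Z}
    (hc : E.conflation i p) [Mono p] : IsZero X := by
  have hi : i = 0 := by rw [← cancel_mono p, E.comp_zero i p hc, zero_comp]
  obtain ⟨_, _, huniq⟩ := E.isKernel i p hc (0 : X ⟶ Y) zero_comp
  rw [IsZero.iff_id_eq_zero]
  exact (huniq (𝟙 X) (by simp [hi])).trans (huniq 0 zero_comp).symm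

lemma isZero_of_conflation_of_epi {X Y Z : A} {i : X ⟶ Y} {p : Y ⟶ Z}
    (hc : E.conflation i p) [Epi i] : IsZero Z := by
  have hp : p = 0 := by rw [← cancel_epi i, E.comp_zero i p hc, Limits.comp_zero]
  obtain ⟨_, _, huniq⟩ := E.isCokernel i p hc (0 : Y ⟶ Z) Limits.comp_zero
  rw [IsZero.iff_id_eq_zero]
  exact (huniq (𝟙 Z) (by simp [hp])).trans (huniq 0 Limits.comp_zero).symm

lemma conflation_of_isZero_of_isIso {X Y Z : A} (i : X ⟶ Y) (p : Y ⟶ Z) (hX : IsZero X)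
    [IsIso p] : E.conflation i p := by
  obtain ⟨X₀, i₀, hc₀⟩ := E.zero_deflation X hX
  obtain ⟨Y', _, p', hpb, X', i', hc'⟩ :=
    E.pullback_deflation (𝟙 X) (0 : Z ⟶ X) ⟨X₀, i₀, hc₀⟩
  have := hpb.isIso_snd_of_isIso
  have hX' := E.isZero_of_conflation_of_mono hc'
  exact E.iso_closed i' p' i p (hX'.iso hX) (asIso p' ≪≫ (asIso p).symm) (Iso.refl Z)
    (hX'.eq_of_src _ _) (by simp) hc'

lemma conflation_of_isIso_of_isZero {X Y Z : A} (i : X ⟶ Y) (p : Y ⟶ Z) [IsIso i]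
    (hZ : IsZero Z) : E.conflation i p := by
  have : IsIso (0 : Z ⟶ Z) := hZ.isIso hZ _
  obtain ⟨Y', _, i', hpo, Z', p', hc'⟩ := E.pushout_inflation (0 : Z ⟶ Z) (0 : Z ⟶ X)
    ⟨Z, 𝟙 Z, E.conflation_of_isZero_of_isIso _ _ hZ⟩
  have := hpo.isIso_inr_of_isIso
  have hZ' := E.isZero_of_conflation_of_epi hc'
  exact E.iso_closed i' p' i p (Iso.refl X) ((asIso i').symm ≪≫ asIso i) (hZ'.iso hZ)
    (by simp) (hZ.eq_of_tgt _ _) hc'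

lemma conflation_neg_left {X Y Z : A} {i : X ⟶ Y} {p : Y ⟶ Z} (hc : E.conflation i p) :
    E.conflation (-i) p :=
  E.iso_closed i p (-i) p ⟨-𝟙 X, -𝟙 X, by simp, by simp⟩ (Iso.refl Y) (Iso.refl Z)
    (by simp) (by simp) hc

end ExactStructure

namespace StrictlyAcyclic

variable (N : CochainComplex A ℤ) (n : ℤ)

/-- For a complex concentrated in degrees `n - 1, n, n + 1`, the cycles in degree `m` are
`N^{m-1}` (via `d`) when `m ≤ n`, and `N^m` when `n < m`. -/
def threeTermCycles (m : ℤ) : A := if m ≤ n then N.X (m - 1) else N.X m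

def threeTermInflation (m : ℤ) : threeTermCycles N n m ⟶ N.X m :=
  if h : m ≤ n then eqToHom (show threeTermCycles N n m = _ from if_pos h) ≫ N.d (m - 1) m
  else eqToHom (show threeTermCycles N n m = _ from if_neg h)

def threeTermDeflation (m : ℤ) : N.X m ⟶ threeTermCycles N n (m + 1) :=
  if h : m + 1 ≤ n then eqToHom (by rw [threeTermCycles, if_pos h, add_sub_cancel_right])
  else N.d m (m + 1) ≫ eqToHom (show threeTermCycles N n (m + 1) = _ from if_neg h).symm

lemma d_eq_threeTermDeflation_comp (m : ℤ) :
    N.d m (m + 1) = threeTermDeflation N n m ≫ threeTermInflation N n (m + 1) := by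
  by_cases h : m + 1 ≤ n
  · rw [threeTermDeflation, threeTermInflation, dif_pos h, dif_pos h]
    simp
  · rw [threeTermDeflation, threeTermInflation, dif_neg h, dif_neg h]
    simp

variable (E : ExactStructure A) {n}

lemma conflation_threeTermInflation_threeTermDeflation
    (hN : ∀ k, k < n - 1 ∨ n + 1 < k → IsZero (N.X k))
    (hc : E.conflation (N.d (n - 1) n) (N.d n (n + 1))) (m : ℤ) :
    E.conflation (threeTermInflation N n m) (threeTermDeflation N n m) := by
  rcases lt_trichotomy m n with hm | rfl | hm
  · rw [threeTermInflation, threeTermDeflation, dif_pos hm.le, dif_pos (by omega)]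
    refine E.conflation_of_isZero_of_isIso _ _ ?_
    rw [threeTermCycles, if_pos hm.le]
    exact hN (m - 1) (by omega)
  · rw [threeTermInflation, threeTermDeflation, dif_pos le_rfl, dif_neg (by omega)]
    exact E.iso_closed _ _ _ _ (eqToIso (show threeTermCycles N m m = _ from if_pos le_rfl)).symm
      (Iso.refl _) (eqToIso (show threeTermCycles N m (m + 1) = _ from if_neg (by omega))).symm
      (by simp) (by simp) hc
  · rw [threeTermInflation, threeTermDeflation, dif_neg hm.not_ge, dif_neg (by omega)]
    refine E.conflation_of_isIso_of_isZero _ _ ?_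
    rw [threeTermCycles, if_neg (by omega)]
    exact hN (m + 1) (by omega)

end StrictlyAcyclic

open StrictlyAcyclic in
theorem strictlyAcyclic_of_conflation (E : ExactStructure A) (N : CochainComplex A ℤ) (n : ℤ)
    (hN : ∀ k, k < n - 1 ∨ n + 1 < k → IsZero (N.X k))
    (hc : E.conflation (N.d (n - 1) n) (N.d n (n + 1))) : StrictlyAcyclic E N :=
  ⟨threeTermCycles N n, threeTermInflation N n, threeTermDeflation N n,
    conflation_threeTermInflation_threeTermDeflation N E hN hc, d_eq_threeTermDeflation_comp N n⟩

namespace CochainComplex.mappingCone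

variable {C : Type*} [Category C] [Preadditive C] {F G : CochainComplex C ℤ} (φ : F ⟶ G)
  [HomologicalComplex.HasHomotopyCofiber φ]

@[simps]
noncomputable def inrXIso (n : ℤ) (h : IsZero (F.X (n + 1))) : G.X n ≅ (mappingCone φ).X n where
  hom := (inr φ).f n
  inv := (snd φ).v n n (add_zero n)
  inv_hom_id := by
    rw [← id_X φ n (n + 1) rfl, h.eq_of_tgt ((fst φ).1.v n (n + 1) rfl) 0]
    simp

@[simps]
noncomputable def inlXIso (n m : ℤ) (hnm : n + (-1) = m) (h : IsZero (G.X m)) :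
    F.X n ≅ (mappingCone φ).X m where
  hom := (inl φ).v n m hnm
  inv := (fst φ).1.v m n (by omega)
  hom_inv_id := inl_v_fst_v φ n m (by omega)
  inv_hom_id := by
    rw [← id_X φ m n (by omega), h.eq_of_tgt ((snd φ).v m m (add_zero m)) 0]
    simp

end CochainComplex.mappingCone

namespace CochainComplex

open HomologicalComplex

variable [HasZeroObject A] [HasBinaryBiproducts A] {X Y Z : A} (i : X ⟶ Y) (p : Y ⟶ Z)
  (hip : i ≫ p = 0)

noncomputable def mappingConeSingleDesc : mappingCone ((single A (.up ℤ) 0).map i) ⟶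
    (single A (.up ℤ) 0).obj Z :=
  mappingCone.desc _ 0 ((single A (.up ℤ) 0).map p)
    (by rw [HomComplex.δ_zero, ← Functor.map_comp, hip, Functor.map_zero,
      HomComplex.Cochain.ofHom_zero])

lemma inr_mappingConeSingleDesc :
    mappingCone.inr _ ≫ mappingConeSingleDesc i p hip = (single A (.up ℤ) 0).map p :=
  mappingCone.inr_desc _ _ _ _

lemma isZero_mappingCone_mappingConeSingleDesc_X (k : ℤ) (hk : k < -2 ∨ 0 < k) :
    IsZero ((mappingCone (mappingConeSingleDesc i p hip)).X k) := by
  simp only [mappingCone.isZero_X_iff]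
  exact ⟨⟨isZero_single_obj_X _ _ _ _ (by omega), isZero_single_obj_X _ _ _ _ (by omega)⟩,
    isZero_single_obj_X _ _ _ _ (by omega)⟩

noncomputable def mappingConeSingleDescXIso₀ :
    Z ≅ (mappingCone (mappingConeSingleDesc i p hip)).X 0 :=
  (singleObjXSelf (.up ℤ) 0 Z).symm ≪≫ mappingCone.inrXIso _ 0
    ((mappingCone.isZero_X_iff _ _).2
      ⟨isZero_single_obj_X _ _ _ _ (by omega), isZero_single_obj_X _ _ _ _ (by omega)⟩)

noncomputable def mappingConeSingleDescXIso₁ :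
    Y ≅ (mappingCone (mappingConeSingleDesc i p hip)).X (-1) :=
  (singleObjXSelf (.up ℤ) 0 Y).symm ≪≫
    mappingCone.inrXIso _ 0 (isZero_single_obj_X _ _ _ _ (by omega)) ≪≫
    mappingCone.inlXIso _ 0 (-1) (by omega) (isZero_single_obj_X _ _ _ _ (by omega))

noncomputable def mappingConeSingleDescXIso₂ :
    X ≅ (mappingCone (mappingConeSingleDesc i p hip)).X (-2) :=
  (singleObjXSelf (.up ℤ) 0 X).symm ≪≫
    mappingCone.inlXIso _ 0 (-1) (by omega) (isZero_single_obj_X _ _ _ _ (by omega)) ≪≫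
    mappingCone.inlXIso _ (-1) (-2) (by omega) (isZero_single_obj_X _ _ _ _ (by omega))

lemma mappingConeSingleDescXIso₂_hom_d :
    (mappingConeSingleDescXIso₂ i p hip).hom ≫
        (mappingCone (mappingConeSingleDesc i p hip)).d (-2) (-1) =
      (-i) ≫ (mappingConeSingleDescXIso₁ i p hip).hom := by
  have : (mappingConeSingleDesc i p hip).f (-1) = 0 :=
    (isZero_single_obj_X _ _ _ _ (by omega)).eq_of_tgt _ _
  simp [this, single_map_f_self, mappingConeSingleDescXIso₂, mappingConeSingleDescXIso₁,
    mappingCone.inl_v_d _ (-1) (-2) 0 (by omega) (by omega),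
    mappingCone.inl_v_d_assoc _ 0 (-1) 1 (by omega) (by omega)]

lemma mappingConeSingleDescXIso₁_hom_d :
    (mappingConeSingleDescXIso₁ i p hip).hom ≫
        (mappingCone (mappingConeSingleDesc i p hip)).d (-1) 0 =
      p ≫ (mappingConeSingleDescXIso₀ i p hip).hom := by
  have := congr_hom (inr_mappingConeSingleDesc i p hip) 0
  simp only [comp_f] at this
  simp [reassoc_of% this, single_map_f_self, mappingConeSingleDescXIso₁,
    mappingConeSingleDescXIso₀, mappingCone.inl_v_d _ 0 (-1) 1 (by omega) (by omega)]

lemma isBoundedComplex_mappingCone_mappingConeSingleDesc :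
    IsBoundedComplex (mappingCone (mappingConeSingleDesc i p hip)) :=
  ⟨-2, 0, isZero_mappingCone_mappingConeSingleDesc_X i p hip⟩

lemma strictlyAcyclic_mappingCone_mappingConeSingleDesc (E : ExactStructure A)
    (hc : E.conflation i p) :
    StrictlyAcyclic E (mappingCone (mappingConeSingleDesc i p hip)) := by
  have hd : E.conflation ((mappingCone (mappingConeSingleDesc i p hip)).d (-2) (-1))
      ((mappingCone (mappingConeSingleDesc i p hip)).d (-1) 0) :=
    E.iso_closed _ _ _ _ (mappingConeSingleDescXIso₂ i p hip) (mappingConeSingleDescXIso₁ i p hip)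
      (mappingConeSingleDescXIso₀ i p hip) (mappingConeSingleDescXIso₂_hom_d i p hip).symm
      (mappingConeSingleDescXIso₁_hom_d i p hip).symm (E.conflation_neg_left hc)
  exact strictlyAcyclic_of_conflation E _ (-1)
    (fun k hk => isZero_mappingCone_mappingConeSingleDesc_X i p hip k (by omega))
    (by simpa using hd)

end CochainComplex

lemma CategoryTheory.Pretriangulated.distinguished_mk_of_iso₃ {C : Type*}
    [Category C] [HasZeroObject C] [HasShift C ℤ] [Preadditive C]
    [∀ n : ℤ, (shiftFunctor C n).Additive] [Pretriangulated C]
    {X₁ X₂ X₃ W : C} {f : X₁ ⟶ X₂} {g : X₂ ⟶ X₃} {h : X₃ ⟶ X₁⟦(1 : ℤ)⟧}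
    (hT : Triangle.mk f g h ∈ distTriang C) (e : X₃ ≅ W) {g' : X₂ ⟶ W} (hg : g ≫ e.hom = g') :
    Triangle.mk f g' (e.inv ≫ h) ∈ distTriang C := by
  subst hg
  have comm₂ : (g ≫ e.hom) ≫ e.inv = 𝟙 X₂ ≫ g := by simp
  have comm₃ : (e.inv ≫ h) ≫ (𝟙 X₁)⟦(1 : ℤ)⟧' = e.inv ≫ h := by simp
  exact isomorphic_distinguished _ hT _ (Triangle.isoMk _ _ (Iso.refl _) (Iso.refl _) e.symm
    ((Category.comp_id f).trans (Category.id_comp f).symm) comm₂ comm₃)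

lemma HomotopyCategory.isIso_map_quotient_map_of_isZero_map_mappingCone {C D : Type*}
    [Category C] [Preadditive C] [HasZeroObject C] [HasBinaryBiproducts C]
    [Category D] [HasZeroObject D] [HasShift D ℤ] [Preadditive D]
    [∀ n : ℤ, (shiftFunctor D n).Additive] [Pretriangulated D]
    (L : HomotopyCategory C (.up ℤ) ⥤ D) [L.CommShift ℤ] [L.IsTriangulated]
    {K M : CochainComplex C ℤ} (φ : K ⟶ M)
    (h : IsZero (L.obj ((quotient C (.up ℤ)).obj (CochainComplex.mappingCone φ)))) :
    IsIso (L.map ((quotient C (.up ℤ)).map φ)) :=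
  (Triangle.isZero₃_iff_isIso₁ _
    (L.map_distinguished _ (mappingCone_triangleh_distinguished φ))).1 h

/-- Let `A` be an exact category and let `L` be a triangulated functor from the
homotopy category of complexes over `A` to a triangulated category `D` which kills
the bounded acyclic complexes (so that `L` factors the localization defining the
derived category `D^b(A)`). Writing `can : A ⥤ D` for the composite of the
degree-`0` embedding with `L`, every conflation `X ⟶ Y ⟶ Z` of `A` gives rise to
a distinguished triangle `can X ⟶ can Y ⟶ can Z ⟶ (can X)⟦1⟧` in `D`. -/
theorem stmt_17 [HasZeroObject A] [HasBinaryBiproducts A] (E : ExactStructure A)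
    {D : Type u'} [Category.{v'} D] [HasZeroObject D] [Preadditive D] [HasShift D ℤ]
    [∀ n : ℤ, (CategoryTheory.shiftFunctor D n).Additive] [Pretriangulated D]
    (L : HomotopyCategory A (ComplexShape.up ℤ) ⥤ D) [L.CommShift ℤ]
    [L.IsTriangulated]
    (hL : ∀ N : CochainComplex A ℤ, IsBoundedComplex N → StrictlyAcyclic E N →
      IsZero (L.obj ((HomotopyCategory.quotient A (ComplexShape.up ℤ)).obj N)))
    (can : A ⥤ D)
    (hcan : can = HomologicalComplex.single A (ComplexShape.up ℤ) 0 ⋙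
      HomotopyCategory.quotient A (ComplexShape.up ℤ) ⋙ L)
    {X Y Z : A} (i : X ⟶ Y) (p : Y ⟶ Z) (hc : E.conflation i p) :
    ∃ δ : can.obj Z ⟶ (can.obj X)⟦(1 : ℤ)⟧,
      Triangle.mk (can.map i) (can.map p) δ ∈ distTriang D := by
  subst hcan
  have hip := E.comp_zero i p hc
  have hacyclic := hL _ (CochainComplex.isBoundedComplex_mappingCone_mappingConeSingleDesc i p hip)
    (CochainComplex.strictlyAcyclic_mappingCone_mappingConeSingleDesc i p hip E hc)
  have := HomotopyCategory.isIso_map_quotient_map_of_isZero_map_mappingCone L _ hacyclic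
  let e := asIso (L.map ((HomotopyCategory.quotient A (.up ℤ)).map
    (CochainComplex.mappingConeSingleDesc i p hip)))
  have hp : L.map ((HomotopyCategory.quotient A (.up ℤ)).map (CochainComplex.mappingCone.inr _)) ≫
      e.hom = L.map ((HomotopyCategory.quotient A (.up ℤ)).map
        ((HomologicalComplex.single A (.up ℤ) 0).map p)) := by
    rw [asIso_hom, ← L.map_comp, ← Functor.map_comp,
      CochainComplex.inr_mappingConeSingleDesc]
  exact ⟨_, distinguished_mk_of_iso₃ (L.map_distinguished _
    (HomotopyCategory.mappingCone_triangleh_distinguished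
      ((HomologicalComplex.single A (.up ℤ) 0).map i))) e hp⟩
end
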